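/- arXiv:1408.4536 — 2 statements merged into one kernel-verified Lean document; each statement's English description precedes it below -/
import Mathlib

section
/- Let Y ⊆ ℝ^d be bounded and convex. The set K_Y := { ψ* : ψ is a function from Y to ℝ ∪ {+∞} } of Legendre–Fenchel transforms over Y is convex: if φ₀ = ψ₀* and φ₁ = ψ₁* are both finite-valued and t ∈ [0,1], then (1-t)φ₀ + tφ₁ is also the Legendre–Fenchel transform of some function on Y. -/
open scoped RealInnerProductSpace

noncomputable def legendre {d : ℕ} (Y : Set (EuclideanSpace ℝ (Fin d)))
    (ψ : EuclideanSpace ℝ (Fin d) → EReal) (x : EuclideanSpace ℝ (Fin d)) : EReal :=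
  ⨆ y ∈ Y, ((⟪x, y⟫ : ℝ) : EReal) - ψ y

/-!
If `ψ₀* = φ₀` and `ψ₁* = φ₁` are finite, then
`ψ y := inf {(1-t) ψ₀ y₀ + t ψ₁ y₁ : y₀, y₁ ∈ Y, (1-t) y₀ + t y₁ = y}` has
`ψ* = (1-t) φ₀ + t φ₁`. A finite value `ψ* x = a` amounts to the affine minorant bound
`⟪x, y⟫ - a ≤ ψ y` on `Y` together with its near-attainment; both are inequalities between `ψ`
and real numbers, and they pass to `ψ` by taking the same convex combination of points and bounds.
-/

namespace EReal

lemma coe_sub_le_coe_iff {c a : ℝ} {b : EReal} :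
    (c : EReal) - b ≤ a ↔ ((c - a : ℝ) : EReal) ≤ b := by
  induction b with
  | bot => simp only [coe_sub_bot, top_le_iff, le_bot_iff, coe_ne_top, coe_ne_bot]
  | coe b => norm_cast; constructor <;> intro h <;> linarith
  | top => simp

lemma coe_le_coe_sub_iff {c a : ℝ} {b : EReal} :
    (a : EReal) ≤ c - b ↔ b ≤ ((c - a : ℝ) : EReal) := by
  induction b with
  | bot => simp
  | coe b => norm_cast; constructor <;> intro h <;> linarith
  | top => simp only [sub_top, le_bot_iff, top_le_iff, coe_ne_bot, coe_ne_top]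

variable {t a₀ a₁ : ℝ} {b₀ b₁ : EReal}

lemma coe_convexCombination_le (ht : t ∈ Set.Icc (0 : ℝ) 1)
    (h₀ : (a₀ : EReal) ≤ b₀) (h₁ : (a₁ : EReal) ≤ b₁) :
    (((1 - t) * a₀ + t * a₁ : ℝ) : EReal) ≤ ((1 - t : ℝ) : EReal) * b₀ + (t : EReal) * b₁ := by
  push_cast
  gcongr
  · exact_mod_cast _root_.sub_nonneg.2 ht.2
  · exact_mod_cast ht.1

lemma convexCombination_le_coe (ht : t ∈ Set.Icc (0 : ℝ) 1)
    (h₀ : b₀ ≤ a₀) (h₁ : b₁ ≤ a₁) :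
    ((1 - t : ℝ) : EReal) * b₀ + (t : EReal) * b₁ ≤ (((1 - t) * a₀ + t * a₁ : ℝ) : EReal) := by
  push_cast
  gcongr
  · exact_mod_cast _root_.sub_nonneg.2 ht.2
  · exact_mod_cast ht.1

end EReal

noncomputable def weightedInfConv {E : Type*} [AddCommGroup E] [Module ℝ E] (Y : Set E) (t : ℝ)
    (ψ₀ ψ₁ : E → EReal) (y : E) : EReal :=
  ⨅ (y₀ ∈ Y) (y₁ ∈ Y) (_ : (1 - t) • y₀ + t • y₁ = y),
    ((1 - t : ℝ) : EReal) * ψ₀ y₀ + (t : EReal) * ψ₁ y₁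

section weightedInfConv

variable {E : Type*} {Y : Set E} {t : ℝ} {ψ₀ ψ₁ : E → EReal}

lemma weightedInfConv_le [AddCommGroup E] [Module ℝ E] (ht : t ∈ Set.Icc (0 : ℝ) 1)
    {y₀ y₁ : E} (hy₀ : y₀ ∈ Y) (hy₁ : y₁ ∈ Y) {a₀ a₁ : ℝ} (h₀ : ψ₀ y₀ ≤ a₀) (h₁ : ψ₁ y₁ ≤ a₁) :
    weightedInfConv Y t ψ₀ ψ₁ ((1 - t) • y₀ + t • y₁) ≤ (((1 - t) * a₀ + t * a₁ : ℝ) : EReal) :=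
  (biInf_le _ hy₀).trans <| (biInf_le _ hy₁).trans <| (iInf_le _ rfl).trans <|
    EReal.convexCombination_le_coe ht h₀ h₁

lemma coe_inner_sub_le_weightedInfConv [NormedAddCommGroup E] [InnerProductSpace ℝ E]
    (ht : t ∈ Set.Icc (0 : ℝ) 1) {x : E} {a₀ a₁ : ℝ}
    (h₀ : ∀ y ∈ Y, ((⟪x, y⟫ - a₀ : ℝ) : EReal) ≤ ψ₀ y)
    (h₁ : ∀ y ∈ Y, ((⟪x, y⟫ - a₁ : ℝ) : EReal) ≤ ψ₁ y) (y : E) :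
    ((⟪x, y⟫ - ((1 - t) * a₀ + t * a₁) : ℝ) : EReal) ≤ weightedInfConv Y t ψ₀ ψ₁ y := by
  refine le_iInf₂ fun y₀ hy₀ => le_iInf₂ fun y₁ hy₁ => le_iInf fun hy => ?_
  convert EReal.coe_convexCombination_le ht (h₀ y₀ hy₀) (h₁ y₁ hy₁) using 2
  rw [← hy, inner_add_right, real_inner_smul_right, real_inner_smul_right]
  ring

end weightedInfConv

lemma legendre_eq_coe_iff {d : ℕ} {Y : Set (EuclideanSpace ℝ (Fin d))}
    {ψ : EuclideanSpace ℝ (Fin d) → EReal} {x : EuclideanSpace ℝ (Fin d)} {a : ℝ} :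
    legendre Y ψ x = a ↔ (∀ y ∈ Y, ((⟪x, y⟫ - a : ℝ) : EReal) ≤ ψ y) ∧
      ∀ ε > 0, ∃ y ∈ Y, ψ y ≤ ((⟪x, y⟫ - a + ε : ℝ) : EReal) := by
  simp only [← EReal.coe_sub_le_coe_iff]
  constructor
  · intro h
    refine ⟨fun y hy => h ▸ le_biSup (fun y => ((⟪x, y⟫ : ℝ) : EReal) - ψ y) hy, fun ε hε => ?_⟩
    have hlt : ((a - ε : ℝ) : EReal) < legendre Y ψ x := h ▸ by exact_mod_cast sub_lt_self a hε
    obtain ⟨y, hy, hlt⟩ := lt_biSup_iff.1 hlt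
    exact ⟨y, hy, (EReal.coe_le_coe_sub_iff.1 hlt.le).trans_eq (congrArg _ (by ring))⟩
  · rintro ⟨hle, hclose⟩
    refine le_antisymm (iSup₂_le hle) (EReal.ge_of_forall_gt_iff_ge.1 fun z hz => ?_)
    obtain ⟨y, hy, hψ⟩ := hclose (a - z) (sub_pos.2 (EReal.coe_lt_coe_iff.1 hz))
    refine le_trans ?_ (le_biSup (fun y => ((⟪x, y⟫ : ℝ) : EReal) - ψ y) hy)
    exact EReal.coe_le_coe_sub_iff.2 (hψ.trans_eq (congrArg _ (by ring)))

theorem KY_convex_general {d : ℕ} (Y : Set (EuclideanSpace ℝ (Fin d)))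
    (hYc : Convex ℝ Y)
    (φ₀ φ₁ : EuclideanSpace ℝ (Fin d) → ℝ)
    (h₀ : ∃ ψ₀, ∀ x, (φ₀ x : EReal) = legendre Y ψ₀ x)
    (h₁ : ∃ ψ₁, ∀ x, (φ₁ x : EReal) = legendre Y ψ₁ x)
    (t : ℝ) (ht : t ∈ Set.Icc (0:ℝ) 1) :
    ∃ ψ, ∀ x, (((1 - t) * φ₀ x + t * φ₁ x : ℝ) : EReal) = legendre Y ψ x := by
  obtain ⟨ψ₀, hψ₀⟩ := h₀
  obtain ⟨ψ₁, hψ₁⟩ := h₁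
  refine ⟨weightedInfConv Y t ψ₀ ψ₁, fun x => Eq.symm <| legendre_eq_coe_iff.2 ?_⟩
  obtain ⟨hle₀, hclose₀⟩ := legendre_eq_coe_iff.1 (hψ₀ x).symm
  obtain ⟨hle₁, hclose₁⟩ := legendre_eq_coe_iff.1 (hψ₁ x).symm
  refine ⟨fun y _ => coe_inner_sub_le_weightedInfConv ht hle₀ hle₁ y, fun ε hε => ?_⟩
  obtain ⟨y₀, hy₀, h₀⟩ := hclose₀ ε hε
  obtain ⟨y₁, hy₁, h₁⟩ := hclose₁ ε hε
  refine ⟨(1 - t) • y₀ + t • y₁, hYc hy₀ hy₁ (sub_nonneg.2 ht.2) ht.1 (sub_add_cancel 1 t), ?_⟩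
  refine (weightedInfConv_le ht hy₀ hy₁ h₀ h₁).trans_eq (congrArg _ ?_)
  rw [inner_add_right, real_inner_smul_right, real_inner_smul_right]
  ring

/-- The set `K_Y` of Legendre–Fenchel transforms over a bounded convex set `Y` is convex. -/
theorem KY_convex {d : ℕ} (Y : Set (EuclideanSpace ℝ (Fin d)))
    (hYb : Bornology.IsBounded Y) (hYc : Convex ℝ Y)
    (φ₀ φ₁ : EuclideanSpace ℝ (Fin d) → ℝ)
    (h₀ : ∃ ψ₀, ∀ x, (φ₀ x : EReal) = legendre Y ψ₀ x)
    (h₁ : ∃ ψ₁, ∀ x, (φ₁ x : EReal) = legendre Y ψ₁ x)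
    (t : ℝ) (ht : t ∈ Set.Icc (0:ℝ) 1) :
    ∃ ψ, ∀ x, (((1 - t) * φ₀ x + t * φ₁ x : ℝ) : EReal) = legendre Y ψ x :=
  KY_convex_general Y hYc φ₀ φ₁ h₀ h₁ t ht
end

section
/- Fix α ≥ 1 and d ≥ 1 and define U_α(ρ) := ρ^α · (-log(1 - ρ^{1/d})) for ρ ∈ [0,1), U_α(0) = 0. Then the map r ↦ r^d U_α(r^{-d}), defined for r > 1, is convex and non-increasing. -/
/-!
On `r > 1` the function equals `r ^ (d (1 - α)) · (-log (1 - r⁻¹))`, a product of two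
nonnegative, convex, non-increasing factors. Such a product is non-increasing, and convex
because the factors vary together. The power is convex as `exp` of the convex function
`d (1 - α) log r` (note `d (1 - α) ≤ 0`); `-log (1 - r⁻¹)` is convex as the convex non-increasing `-log` composed with
the concave `1 - r⁻¹`.
-/

open Set

theorem ConvexOn.comp_concaveOn_of_mapsTo {𝕜 E β γ : Type*} [Semiring 𝕜] [PartialOrder 𝕜]
    [AddCommMonoid E] [AddCommMonoid β] [PartialOrder β] [AddCommMonoid γ] [PartialOrder γ]
    [SMul 𝕜 E] [SMul 𝕜 β] [SMul 𝕜 γ] {s : Set E} {t : Set β} {f : E → β} {g : β → γ}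
    (hg : ConvexOn 𝕜 t g) (hf : ConcaveOn 𝕜 s f) (hg' : AntitoneOn g t) (hst : MapsTo f s t) :
    ConvexOn 𝕜 s (g ∘ f) :=
  ⟨hf.1, fun _ hx _ hy _ _ ha hb hab =>
    (hg' (hg.1 (hst hx) (hst hy) ha hb hab) (hst (hf.1 hx hy ha hb hab)) (hf.2 hx hy ha hb hab)).trans
      (hg.2 (hst hx) (hst hy) ha hb hab)⟩

theorem AntitoneOn.mul_of_nonneg {α M₀ : Type*} [Mul M₀] [Zero M₀] [Preorder M₀] [Preorder α]
    [PosMulMono M₀] [MulPosMono M₀] {f g : α → M₀} {s : Set α} (hf : AntitoneOn f s)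
    (hg : AntitoneOn g s) (hf₀ : ∀ x ∈ s, 0 ≤ f x) (hg₀ : ∀ x ∈ s, 0 ≤ g x) :
    AntitoneOn (f * g) s :=
  fun _ ha _ hb h ↦ mul_le_mul (hf ha hb h) (hg ha hb h) (hg₀ _ hb) (hf₀ _ ha)

namespace Real

theorem convexOn_rpow_of_nonpos {p : ℝ} (hp : p ≤ 0) : ConvexOn ℝ (Ioi 0) fun x : ℝ => x ^ p := by
  have hexp_conv : ConvexOn ℝ univ fun t => exp (p * t) := by
    simpa only [exp_mul] using convexOn_rpow_left (exp_pos p)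
  have hexp_anti : AntitoneOn (fun t => exp (p * t)) univ := fun a _ b _ hab =>
    exp_le_exp.2 (mul_le_mul_of_nonpos_left hab hp)
  refine (hexp_conv.comp_concaveOn_of_mapsTo strictConcaveOn_log_Ioi.concaveOn hexp_anti
    (mapsTo_univ _ _)).congr fun x hx => ?_
  simp [rpow_def_of_pos hx, mul_comm]

theorem convexOn_neg_log_one_sub_inv : ConvexOn ℝ (Ioi 1) fun x : ℝ => -log (1 - x⁻¹) := by
  have hone_sub_inv : ConcaveOn ℝ (Ioi 1) fun x : ℝ => 1 - x⁻¹ := by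
    have hinv : ConvexOn ℝ (Ioi 1) fun x : ℝ => x⁻¹ := by
      simpa using (convexOn_zpow (𝕜 := ℝ) (-1)).subset (Ioi_subset_Ioi zero_le_one) (convex_Ioi 1)
    exact (concaveOn_const 1 (convex_Ioi 1)).sub hinv
  refine (strictConcaveOn_log_Ioi.concaveOn.neg).comp_concaveOn_of_mapsTo hone_sub_inv
    (fun a ha b _ hab => neg_le_neg (log_le_log ha hab)) fun x hx => ?_
  simpa using inv_lt_one_of_one_lt₀ (mem_Ioi.1 hx)

theorem antitoneOn_neg_log_one_sub_inv : AntitoneOn (fun x : ℝ => -log (1 - x⁻¹)) (Ioi 1) := by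
  intro a ha b hb hab
  have := inv_lt_one_of_one_lt₀ (mem_Ioi.1 ha)
  have := inv_anti₀ (zero_lt_one.trans ha) hab
  exact neg_le_neg (log_le_log (by linarith) (by linarith))

theorem neg_log_one_sub_inv_nonneg {x : ℝ} (hx : 1 < x) : 0 ≤ -log (1 - x⁻¹) := by
  have := inv_pos.2 (zero_lt_one.trans hx)
  have := inv_lt_one_of_one_lt₀ hx
  exact neg_nonneg.2 (log_nonpos (by linarith) (by linarith))

theorem convexOn_rpow_mul_neg_log_one_sub_inv {p : ℝ} (hp : p ≤ 0) :
    ConvexOn ℝ (Ioi 1) fun x : ℝ => x ^ p * -log (1 - x⁻¹) :=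
  ((convexOn_rpow_of_nonpos hp).subset (Ioi_subset_Ioi zero_le_one) (convex_Ioi 1)).mul
    convexOn_neg_log_one_sub_inv (fun _ hx => rpow_nonneg (zero_le_one.trans hx.le) p)
    (fun _ hx => neg_log_one_sub_inv_nonneg hx)
    (((antitoneOn_rpow_Ioi_of_exponent_nonpos hp).mono (Ioi_subset_Ioi zero_le_one)).monovaryOn
      antitoneOn_neg_log_one_sub_inv)

theorem antitoneOn_rpow_mul_neg_log_one_sub_inv {p : ℝ} (hp : p ≤ 0) :
    AntitoneOn (fun x : ℝ => x ^ p * -log (1 - x⁻¹)) (Ioi 1) :=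
  ((antitoneOn_rpow_Ioi_of_exponent_nonpos hp).mono (Ioi_subset_Ioi zero_le_one)).mul_of_nonneg
    antitoneOn_neg_log_one_sub_inv (fun _ hx => rpow_nonneg (zero_le_one.trans hx.le) p)
    (fun _ hx => neg_log_one_sub_inv_nonneg hx)

end Real

open Real

noncomputable def congestionIntegrand (α d ρ : ℝ) : ℝ := ρ ^ α * -log (1 - ρ ^ (1 / d))

theorem rpow_mul_congestionIntegrand_rpow_neg {α d r : ℝ} (hr : 0 < r) (hd : d ≠ 0) :
    r ^ d * congestionIntegrand α d (r ^ (-d)) = r ^ (d * (1 - α)) * -log (1 - r⁻¹) := by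
  have hinv : (r ^ (-d)) ^ (1 / d) = r⁻¹ := by
    rw [← rpow_mul hr.le, neg_mul, mul_one_div_cancel hd, rpow_neg_one]
  rw [congestionIntegrand, hinv, ← rpow_mul hr.le, ← mul_assoc, ← rpow_add hr]
  ring_nf

/-- The smoothed congestion integrand `U_α(ρ) = ρ^α · (-log(1 - ρ^{1/d}))` satisfies
McCann's condition on `(1,∞)`: the map `r ↦ r^d U_α(r^{-d})` is convex and
non-increasing for `r > 1`, whenever `α ≥ 1` and `d ≥ 1`. -/
theorem congestion_integrand_mccann (α : ℝ) (hα : 1 ≤ α) (d : ℕ) (hd : 1 ≤ d) :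
    let U : ℝ → ℝ := fun ρ => ρ ^ α * (-Real.log (1 - ρ ^ (1 / (d : ℝ))))
    ConvexOn ℝ (Set.Ioi (1:ℝ)) (fun r : ℝ => r ^ (d : ℝ) * U (r ^ (-(d : ℝ)))) ∧
    AntitoneOn (fun r : ℝ => r ^ (d : ℝ) * U (r ^ (-(d : ℝ)))) (Set.Ioi (1:ℝ)) := by
  intro U
  have hd₀ : (d : ℝ) ≠ 0 := Nat.cast_ne_zero.2 (by omega)
  have hp : (d : ℝ) * (1 - α) ≤ 0 := mul_nonpos_of_nonneg_of_nonpos d.cast_nonneg (by linarith)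
  have hEq : EqOn (fun r : ℝ => r ^ ((d : ℝ) * (1 - α)) * -log (1 - r⁻¹))
      (fun r => r ^ (d : ℝ) * U (r ^ (-(d : ℝ)))) (Ioi 1) := fun r hr =>
    (rpow_mul_congestionIntegrand_rpow_neg (zero_lt_one.trans hr) hd₀).symm
  exact ⟨(convexOn_rpow_mul_neg_log_one_sub_inv hp).congr hEq,
    (antitoneOn_rpow_mul_neg_log_one_sub_inv hp).congr hEq⟩
end
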